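/- Suppose that for a fixed n and for every 0 ≤ s ≤ S (where S < n), the Lex diagram of size C(n+1,2) − s minimizes the number of maximal NE-paths among all shifted Ferrers diagrams of that size on n columns. Then for every 0 ≤ s ≤ S, the Lex diagram of size C(n+2,2) − s minimizes the number of maximal NE-paths among all shifted Ferrers diagrams of that size on n+1 columns. -/

import Mathlib

/-- A single north (row decreases by 1) or east (column increases by 1) step. -/
def NEStep (p q : ℕ × ℕ) : Prop :=
  (q.1 + 1 = p.1 ∧ q.2 = p.2) ∨ (q.1 = p.1 ∧ q.2 = p.2 + 1)

/-- `l` is an NE-lattice path from `s` to `t` all of whose boxes lie in the diagram `D`. -/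
def IsNEPathIn (D : Set (ℕ × ℕ)) (s t : ℕ × ℕ) (l : List (ℕ × ℕ)) : Prop :=
  l.Chain' NEStep ∧ l.head? = some s ∧ l.getLast? = some t ∧ ∀ b ∈ l, b ∈ D

/-- The shifted staircase diagram on `n` columns. -/
def staircase (n : ℕ) : Set (ℕ × ℕ) := {p | 1 ≤ p.1 ∧ p.1 ≤ p.2 ∧ p.2 ≤ n}

/-- The number of maximal NE-paths in the diagram `D` on `n` columns, i.e. NE-paths from
some diagonal box `(i,i)` to the top-right box `(1,n)`, staying inside `D`. -/
noncomputable def numMaxPaths (D : Set (ℕ × ℕ)) (n : ℕ) : ℕ :=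
  Nat.card {l : List (ℕ × ℕ) // ∃ i, IsNEPathIn D (i, i) (1, n) l}

/-- `D` is the diagram of a strongly stable set of quadratic monomials in `n` variables. -/
def StronglyStableIn (n : ℕ) (D : Set (ℕ × ℕ)) : Prop :=
  D ⊆ staircase n ∧
    ∀ a b a' b' : ℕ, (a, b) ∈ D → 1 ≤ a' → a' ≤ a → a' ≤ b' → b' ≤ b → (a', b') ∈ D

/-- The Lex diagram: the `u` lex-greatest boxes of the staircase on `n` columns, where boxes
are ordered first by row and then by column. -/
def lexSeg (n u : ℕ) : Set (ℕ × ℕ) :=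
  {p ∈ staircase n | (∑ c ∈ Finset.Ico 1 p.1, (n + 1 - c)) + (p.2 - p.1) < u}

/-!
Deleting the top row (`L'`) and the last column (`L''`) of a diagram with full first row splits
its maximal paths, `e(L) = e(L') + e(L'')`, according to whether the path enters the corner
`(1, n + 1)` from below or from the left. Apply this to the Lex diagram `L` of deficiency `s` and
to a strongly stable `D` of the same size. `L'` is again Lex of deficiency `s`, and `D'` has
deficiency `s`. If `D` has `k` boxes in its last column, all its missing boxes lie below row `k`,
so `s ≤ C(n + 2 - k, 2)`; the Lex diagram packs its missing boxes into the fewest bottom rows, so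
`L''` is contained in the Lex diagram of the size of `D''`, whose deficiency is at most `s`.
The hypothesis on `n` columns and monotonicity of `e` finish the argument.
-/

open Finset

lemma Nat.choose_two_succ (m : ℕ) : (m + 2).choose 2 = (m + 1).choose 2 + (m + 1) := by
  rw [Nat.choose_succ_succ, Nat.choose_one_right, add_comm]

lemma Nat.choose_two_add_sub_le {x y : ℕ} (h : x ≤ y) :
    (x + 1).choose 2 + (y - x) ≤ (y + 1).choose 2 := by
  induction y, h using Nat.le_induction with
  | base => simp
  | succ y hxy ih => rw [Nat.choose_two_succ]; omega

lemma Nat.self_le_succ_choose_two (m : ℕ) : m ≤ (m + 1).choose 2 := by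
  simpa using Nat.choose_two_add_sub_le (Nat.zero_le m)

-- With this, `lexSeg n u = {p ∈ staircase n | rowStart n p.1 + (p.2 - p.1) < u}` by definition.
def rowStart (n a : ℕ) : ℕ := ∑ c ∈ Ico 1 a, (n + 1 - c)

lemma rowStart_add_choose {n a : ℕ} (h1 : 1 ≤ a) (h2 : a ≤ n + 1) :
    rowStart n a + (n + 2 - a).choose 2 = (n + 1).choose 2 := by
  induction a, h1 using Nat.le_induction with
  | base => simp [rowStart]
  | succ a ha ih =>
    have hsucc : n + 2 - a = n - a + 2 := by omega
    rw [rowStart, sum_Ico_succ_top ha, ← rowStart, ← ih (by omega), hsucc, Nat.choose_two_succ,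
      show n + 2 - (a + 1) = n - a + 1 by omega]
    omega

lemma rowStart_succ_left {n a : ℕ} (h : a ≤ n + 2) :
    rowStart (n + 1) a = rowStart n a + (a - 1) := by
  rw [rowStart, rowStart, ← Nat.card_Ico 1 a, card_eq_sum_ones, ← sum_add_distrib]
  refine sum_congr rfl fun c hc => ?_
  rw [mem_Ico] at hc
  omega

lemma rowStart_succ_succ {n a : ℕ} (h : 1 ≤ a) :
    rowStart (n + 1) (a + 1) = rowStart n a + (n + 1) := by
  rw [rowStart, sum_eq_sum_Ico_succ_bot (by omega), rowStart, ← sum_Ico_add' _ 1 a 1]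
  simp only [show ∀ c, n + 1 + 1 - (c + 1) = n + 1 - c by omega]
  omega

def truncCols (n : ℕ) (D : Set (ℕ × ℕ)) : Set (ℕ × ℕ) := {p ∈ D | p.2 ≤ n}

def shiftDiag (k : ℕ) (p : ℕ × ℕ) : ℕ × ℕ := (p.1 + k, p.2 + k)

def deleteTopRow (D : Set (ℕ × ℕ)) : Set (ℕ × ℕ) :=
  {p | 1 ≤ p.1 ∧ shiftDiag 1 p ∈ D}

lemma shiftDiag_injective (k : ℕ) : Function.Injective (shiftDiag k) := by
  rintro ⟨a, b⟩ ⟨c, d⟩ h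
  simp only [shiftDiag, Prod.mk.injEq] at h
  exact Prod.ext (by omega) (by omega)

lemma staircase_finite (m : ℕ) : (staircase m).Finite :=
  (Set.finite_Icc ((1 : ℕ), (1 : ℕ)) (m, m)).subset fun p ⟨h1, h2, h3⟩ =>
    ⟨⟨h1, by omega⟩, ⟨by omega, h3⟩⟩

lemma ncard_Icc_one (m : ℕ) : (Set.Icc 1 m).ncard = m := by
  rw [← Finset.coe_Icc, Set.ncard_coe_finset, Nat.card_Icc, Nat.add_sub_cancel]

lemma ncard_eq_ncard_deleteTopRow_add {m : ℕ} {D : Set (ℕ × ℕ)}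
    (hD : D ⊆ staircase (m + 1)) (hrow : ∀ b, 1 ≤ b → b ≤ m + 1 → (1, b) ∈ D) :
    D.ncard = (deleteTopRow D).ncard + (m + 1) := by
  have hsplit : D = shiftDiag 1 '' deleteTopRow D ∪ (fun b => (1, b)) '' Set.Icc 1 (m + 1) := by
    ext ⟨a, b⟩
    simp only [Set.mem_union, Set.mem_image, deleteTopRow, shiftDiag, Set.mem_ofPred_eq,
      Set.mem_Icc, Prod.exists, Prod.mk.injEq]
    constructor
    · intro hab
      obtain ⟨h1, h2, -⟩ := hD hab
      rcases Nat.lt_or_ge 1 a with ha | ha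
      · exact Or.inl ⟨a - 1, b - 1, ⟨by omega, by rwa [Nat.sub_add_cancel (by omega),
          Nat.sub_add_cancel (by omega)]⟩, by omega, by omega⟩
      · exact Or.inr ⟨b, ⟨by omega, hD hab |>.2.2⟩, by omega, rfl⟩
    · rintro (⟨c, d, ⟨-, hcd⟩, rfl, rfl⟩ | ⟨c, ⟨hc1, hc2⟩, rfl, rfl⟩)
      · exact hcd
      · exact hrow c hc1 hc2
  have hdisj :
      Disjoint (shiftDiag 1 '' deleteTopRow D) ((fun b => (1, b)) '' Set.Icc 1 (m + 1)) := by
    rw [Set.disjoint_left]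
    rintro _ ⟨p, ⟨hp, -⟩, rfl⟩ ⟨b, -, hb⟩
    simp only [shiftDiag, Prod.mk.injEq] at hb
    omega
  have hfin : (deleteTopRow D).Finite :=
    ((staircase_finite (m + 1)).subset hD).preimage (shiftDiag_injective 1).injOn
      |>.subset fun p hp => hp.2
  conv_lhs => rw [hsplit]
  rw [Set.ncard_union_eq hdisj (hfin.image _) ((Set.finite_Icc _ _).image _),
    Set.ncard_image_of_injective _ (shiftDiag_injective 1),
    Set.ncard_image_of_injective _ fun _ _ h => congrArg Prod.snd h, ncard_Icc_one]

lemma deleteTopRow_staircase (m : ℕ) : deleteTopRow (staircase (m + 1)) = staircase m := by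
  ext ⟨a, b⟩
  simp only [deleteTopRow, staircase, shiftDiag, Set.mem_ofPred_eq]
  omega

lemma ncard_staircase (m : ℕ) : (staircase m).ncard = (m + 1).choose 2 := by
  induction m with
  | zero =>
    rw [show staircase 0 = ∅ from
      Set.eq_empty_of_forall_notMem fun p ⟨h1, h2, h3⟩ => by omega, Set.ncard_empty]
    rfl
  | succ m ih =>
    rw [ncard_eq_ncard_deleteTopRow_add subset_rfl fun b h1 h2 => ⟨le_rfl, h1, h2⟩,
      deleteTopRow_staircase, ih, Nat.choose_two_succ]

lemma ncard_le_of_subset_staircase {m : ℕ} {D : Set (ℕ × ℕ)} (hD : D ⊆ staircase m) :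
    D.ncard ≤ (m + 1).choose 2 :=
  ncard_staircase m ▸ Set.ncard_le_ncard hD (staircase_finite m)

lemma ncard_staircase_rows_gt_le (k m : ℕ) :
    {p ∈ staircase m | k < p.1}.ncard ≤ (m - k + 1).choose 2 := by
  have hsub : {p ∈ staircase m | k < p.1} ⊆ shiftDiag k '' staircase (m - k) := by
    rintro ⟨a, b⟩ ⟨⟨h1, h2, h3⟩, hk⟩
    exact ⟨(a - k, b - k), ⟨by omega, by omega, by omega⟩,
      Prod.ext (by simp [shiftDiag]; omega) (by simp [shiftDiag]; omega)⟩
  calc _ ≤ (shiftDiag k '' staircase (m - k)).ncard :=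
        Set.ncard_le_ncard hsub ((staircase_finite _).image _)
    _ ≤ _ := (Set.ncard_image_le (staircase_finite _)).trans (ncard_staircase _).le

lemma ncard_lastCol_le {n r : ℕ} {D : Set (ℕ × ℕ)} (hD : D ⊆ staircase (n + 1))
    (hr : ∀ a, (a, n + 1) ∈ D → a ≤ r) : (D \ truncCols n D).ncard ≤ r := by
  have hsub : D \ truncCols n D ⊆ (fun a => (a, n + 1)) '' Set.Icc 1 r := by
    rintro ⟨a, b⟩ ⟨hab, hnot⟩
    obtain ⟨h1, -, h3⟩ := hD hab
    have hb : b = n + 1 := by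
      by_contra hb
      exact hnot ⟨hab, by simp only; omega⟩
    subst hb
    exact ⟨a, ⟨h1, hr a hab⟩, rfl⟩
  calc _ ≤ ((fun a => (a, n + 1)) '' Set.Icc 1 r).ncard :=
        Set.ncard_le_ncard hsub ((Set.finite_Icc _ _).image _)
    _ ≤ r := (Set.ncard_image_le (Set.finite_Icc _ _)).trans (ncard_Icc_one r).le

section StronglyStable

variable {n : ℕ} {D : Set (ℕ × ℕ)}

lemma stronglyStableIn_truncCols (hD : StronglyStableIn (n + 1) D) :
    StronglyStableIn n (truncCols n D) := by
  refine ⟨fun p ⟨hp, hpn⟩ => ⟨(hD.1 hp).1, (hD.1 hp).2.1, hpn⟩, ?_⟩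
  intro a b a' b' hab h1 h2 h3 h4
  exact ⟨hD.2 a b a' b' hab.1 h1 h2 h3 h4, h4.trans hab.2⟩

lemma stronglyStableIn_deleteTopRow (hD : StronglyStableIn (n + 1) D) :
    StronglyStableIn n (deleteTopRow D) := by
  refine ⟨fun p ⟨hp, hs⟩ => ?_, ?_⟩
  · obtain ⟨-, h2, h3⟩ := hD.1 hs
    exact ⟨hp, by simp only [shiftDiag] at h2; omega, by simp only [shiftDiag] at h3; omega⟩
  · intro a b a' b' hab h1 h2 h3 h4
    exact ⟨h1, hD.2 (a + 1) (b + 1) (a' + 1) (b' + 1) hab.2 (by omega) (by omega) (by omega)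
      (by omega)⟩

namespace StronglyStableIn

lemma corner_mem (hD : StronglyStableIn (n + 1) D) (hcard : (n + 1).choose 2 < D.ncard) :
    (1, n + 1) ∈ D := by
  by_contra hc
  have hsub : D ⊆ staircase n := by
    rintro ⟨a, b⟩ hab
    obtain ⟨h1, h2, h3⟩ := hD.1 hab
    refine ⟨h1, h2, Nat.le_of_lt_succ (lt_of_le_of_ne h3 ?_)⟩
    rintro rfl
    exact hc (hD.2 a (n + 1) 1 (n + 1) hab le_rfl h1 (by omega) le_rfl)
  exact (ncard_le_of_subset_staircase hsub).not_gt hcard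

lemma ncard_deleteTopRow_add (hD : StronglyStableIn (n + 1) D) (hc : (1, n + 1) ∈ D) :
    (deleteTopRow D).ncard + (n + 1) = D.ncard :=
  (ncard_eq_ncard_deleteTopRow_add hD.1 fun b h1 h2 =>
    hD.2 1 (n + 1) 1 b hc le_rfl le_rfl h1 h2).symm

/-- A box `(a, n + 1) ∈ D` with `p.1 ≤ a` would force `p ∈ D`. -/
lemma ncard_lastCol_lt (hD : StronglyStableIn (n + 1) D) {p : ℕ × ℕ}
    (hp : p ∈ staircase (n + 1) \ D) : (D \ truncCols n D).ncard < p.1 := by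
  obtain ⟨⟨h1, h2, h3⟩, hpD⟩ := hp
  have := ncard_lastCol_le (r := p.1 - 1) hD.1 fun a ha => by
    by_contra hlt
    exact hpD (hD.2 a (n + 1) p.1 p.2 ha h1 (by omega) h2 h3)
  omega

lemma choose_sub_ncard_le (hD : StronglyStableIn (n + 1) D) :
    (n + 2).choose 2 - D.ncard ≤ (n + 2 - (D \ truncCols n D).ncard).choose 2 := by
  rw [← ncard_staircase, ← Set.ncard_sdiff hD.1 ((staircase_finite _).subset hD.1)]
  have hsub :
      staircase (n + 1) \ D ⊆ {p ∈ staircase (n + 1) | (D \ truncCols n D).ncard < p.1} :=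
    fun p hp => ⟨hp.1, hD.ncard_lastCol_lt hp⟩
  have hk := ncard_lastCol_le (r := n + 1) hD.1 fun a ha => (hD.1 ha).2.1
  rw [show n + 2 - (D \ truncCols n D).ncard = n + 1 - (D \ truncCols n D).ncard + 1 by omega]
  exact (Set.ncard_le_ncard hsub ((staircase_finite _).subset fun p hp => hp.1)).trans
    (ncard_staircase_rows_gt_le _ _)

end StronglyStableIn

end StronglyStable

lemma lexSeg_finite (n u : ℕ) : (lexSeg n u).Finite :=
  (staircase_finite n).subset fun _ hp => hp.1

lemma corner_mem_lexSeg {n u : ℕ} (h : n < u) : (1, n + 1) ∈ lexSeg (n + 1) u :=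
  ⟨⟨le_rfl, by omega, le_rfl⟩, by simpa using h⟩

lemma deleteTopRow_lexSeg (n u : ℕ) :
    deleteTopRow (lexSeg (n + 1) u) = lexSeg n (u - (n + 1)) := by
  ext ⟨a, b⟩
  change 1 ≤ a ∧ (a + 1, b + 1) ∈ staircase (n + 1) ∧ rowStart (n + 1) (a + 1) + _ < u ↔
    (a, b) ∈ staircase n ∧ rowStart n a + (b - a) < u - (n + 1)
  simp only [staircase, shiftDiag, Set.mem_ofPred_eq]
  constructor
  · rintro ⟨ha, ⟨-, h2, h3⟩, hrk⟩
    rw [rowStart_succ_succ ha] at hrk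
    omega
  · rintro ⟨⟨h1, h2, h3⟩, hrk⟩
    rw [rowStart_succ_succ h1]
    omega

/-- In the application `k` is the number of boxes in the last column of a strongly stable `D` of
deficiency `s`, so the right-hand side is the Lex diagram of the size of `truncCols n D`. -/
lemma truncCols_lexSeg_subset {n s k : ℕ} (hk : k ≤ n + 1) (hs : s ≤ (n + 2 - k).choose 2) :
    truncCols n (lexSeg (n + 1) ((n + 2).choose 2 - s)) ⊆
      lexSeg n ((n + 2).choose 2 - s - k) := by
  rintro ⟨a, b⟩ ⟨⟨⟨h1, h2, h3⟩, hrk⟩, hb⟩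
  dsimp only at h1 h2 h3 hb
  change rowStart (n + 1) a + (b - a) < _ at hrk
  refine ⟨⟨h1, h2, hb⟩, show rowStart n a + (b - a) < _ from ?_⟩
  rw [rowStart_succ_left (by omega)] at hrk
  have hstart := rowStart_add_choose h1 (by omega : a ≤ n + 1)
  have hsucc := Nat.choose_two_succ n
  rcases Nat.lt_or_ge k a with hka | hak
  · omega
  · have hmono := Nat.choose_two_add_sub_le (show n + 1 - k ≤ n + 1 - a by omega)
    rw [show n + 1 - k + 1 = n + 2 - k by omega, show n + 1 - a + 1 = n + 2 - a by omega] at hmono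
    omega

def diagPaths (D : Set (ℕ × ℕ)) (t : ℕ × ℕ) : Set (List (ℕ × ℕ)) :=
  {l | ∃ i, IsNEPathIn D (i, i) t l}

lemma numMaxPaths_eq_ncard (D : Set (ℕ × ℕ)) (n : ℕ) :
    numMaxPaths D n = (diagPaths D (1, n)).ncard := rfl

lemma NEStep.snd_sub_fst_lt {p q : ℕ × ℕ} (h : NEStep p q) :
    (p.2 : ℤ) - p.1 < q.2 - q.1 := by
  rcases h with ⟨h1, h2⟩ | ⟨h1, h2⟩ <;> omega

lemma NEStep.shiftDiag_iff {k : ℕ} {p q : ℕ × ℕ} :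
    NEStep (shiftDiag k p) (shiftDiag k q) ↔ NEStep p q := by
  simp only [NEStep, shiftDiag]
  omega

lemma List.IsChain.nodup_of_NEStep {l : List (ℕ × ℕ)} (h : l.IsChain NEStep) : l.Nodup := by
  have hlt : (l.map fun p => (p.2 : ℤ) - p.1).IsChain (· < ·) :=
    List.isChain_map_of_isChain _ (fun _ _ hpq => NEStep.snd_sub_fst_lt hpq) h
  exact List.Nodup.of_map _ (hlt.pairwise.imp ne_of_lt)

lemma Set.Finite.setOf_nodup {α : Type*} {S : Set α} (hS : S.Finite) :
    {l : List α | l.Nodup ∧ ∀ x ∈ l, x ∈ S}.Finite := by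
  have : Finite S := hS
  have := Fintype.ofFinite S
  refine ((List.finite_length_le S (Fintype.card S)).image (List.map Subtype.val)).subset ?_
  rintro l ⟨hnd, hl⟩
  lift l to List S using hl
  exact ⟨l, (List.Nodup.of_map _ hnd).length_le_card, rfl⟩

lemma diagPaths_finite {D : Set (ℕ × ℕ)} (hD : D.Finite) (t : ℕ × ℕ) :
    (diagPaths D t).Finite :=
  hD.setOf_nodup.subset fun _ ⟨_, hc, _, _, hmem⟩ => ⟨List.IsChain.nodup_of_NEStep hc, hmem⟩

lemma IsNEPathIn.mono {D E : Set (ℕ × ℕ)} {s t : ℕ × ℕ} {l : List (ℕ × ℕ)}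
    (h : D ⊆ E) (hl : IsNEPathIn D s t l) : IsNEPathIn E s t l :=
  ⟨hl.1, hl.2.1, hl.2.2.1, fun b hb => h (hl.2.2.2 b hb)⟩

lemma diagPaths_mono {D E : Set (ℕ × ℕ)} (h : D ⊆ E) (t : ℕ × ℕ) :
    diagPaths D t ⊆ diagPaths E t :=
  fun _ ⟨i, hl⟩ => ⟨i, hl.mono h⟩

lemma numMaxPaths_mono {D E : Set (ℕ × ℕ)} (h : D ⊆ E) (hE : E.Finite) (n : ℕ) :
    numMaxPaths D n ≤ numMaxPaths E n :=
  Set.ncard_le_ncard (diagPaths_mono h _) (diagPaths_finite hE _)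

namespace IsNEPathIn

variable {D : Set (ℕ × ℕ)} {s t : ℕ × ℕ} {l : List (ℕ × ℕ)}

lemma le_of_mem (h : IsNEPathIn D s t l) : ∀ x ∈ l, t.1 ≤ x.1 ∧ x.2 ≤ t.2 := by
  obtain ⟨hc, -, hlast, -⟩ := h
  refine List.IsChain.backwards_induction _ l hc ?_ fun hne => ?_
  · rintro x y (⟨h1, h2⟩ | ⟨h1, h2⟩) hy <;> omega
  · rw [List.getLast?_eq_some_getLast hne, Option.some.injEq] at hlast
    simp [hlast]

lemma fst_le_snd_of_mem {i : ℕ} (h : IsNEPathIn D (i, i) t l) : ∀ x ∈ l, x.1 ≤ x.2 := by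
  obtain ⟨hc, hhead, -, -⟩ := h
  refine List.IsChain.induction _ l hc ?_ fun hne => ?_
  · rintro x y (⟨h1, h2⟩ | ⟨h1, h2⟩) hx <;> omega
  · rw [List.head?_eq_some_head hne, Option.some.injEq] at hhead
    simp [hhead]

lemma snoc {q : ℕ × ℕ} (h : IsNEPathIn D s q l) (hqt : NEStep q t) (ht : t ∈ D) :
    IsNEPathIn D s t (l ++ [t]) := by
  obtain ⟨hc, hhead, hlast, hmem⟩ := h
  refine ⟨List.isChain_append.2 ⟨hc, List.isChain_singleton t, ?_⟩, ?_,
    List.getLast?_concat, ?_⟩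
  · simp_all
  · simp [List.head?_append, hhead]
  · intro b hb
    rcases List.mem_append.1 hb with hb | hb
    · exact hmem b hb
    · exact (List.mem_singleton.1 hb) ▸ ht

lemma eq_snoc (h : IsNEPathIn D s t l) (hst : s ≠ t) :
    ∃ l' q, l = l' ++ [t] ∧ NEStep q t ∧ IsNEPathIn D s q l' := by
  obtain ⟨hc, hhead, hlast, hmem⟩ := h
  rcases List.eq_nil_or_concat' l with rfl | ⟨L, b, rfl⟩
  · simp at hhead
  rw [List.getLast?_concat, Option.some.injEq] at hlast
  subst hlast
  rcases List.eq_nil_or_concat' L with rfl | ⟨L', q, rfl⟩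
  · simp_all
  obtain ⟨hc', -, hstep⟩ := List.isChain_append.1 hc
  refine ⟨L' ++ [q], q, rfl, by simpa using hstep, hc', ?_, List.getLast?_concat,
    fun x hx => hmem x (List.mem_append_left _ hx)⟩
  rwa [List.head?_append_of_ne_nil _ (by simp)] at hhead

lemma map_shiftDiag_iff {k : ℕ} :
    IsNEPathIn D (shiftDiag k s) (shiftDiag k t) (l.map (shiftDiag k)) ↔
      IsNEPathIn (shiftDiag k ⁻¹' D) s t l := by
  have hinj := Option.map_injective (shiftDiag_injective k)
  refine and_congr ?_ (and_congr ?_ (and_congr ?_ List.forall_mem_map))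
  · change List.IsChain _ _ ↔ List.IsChain _ _
    simp only [List.isChain_map, NEStep.shiftDiag_iff]
  · rw [List.head?_map, ← Option.map_some, hinj.eq_iff]
  · rw [List.getLast?_map, ← Option.map_some, hinj.eq_iff]

end IsNEPathIn

lemma diagPaths_eq_image_snoc {D : Set (ℕ × ℕ)} {a b : ℕ} (hab : a < b) (ht : (a, b) ∈ D) :
    diagPaths D (a, b) =
      (· ++ [(a, b)]) '' (diagPaths D (a + 1, b) ∪ diagPaths D (a, b - 1)) := by
  ext l
  constructor
  · rintro ⟨i, hl⟩
    obtain ⟨l', q, rfl, hqt, hl'⟩ := hl.eq_snoc fun h => by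
      simp only [Prod.mk.injEq] at h
      omega
    refine ⟨l', ?_, rfl⟩
    rcases hqt with ⟨h1, h2⟩ | ⟨h1, h2⟩
    · obtain rfl : q = (a + 1, b) := Prod.ext h1.symm h2.symm
      exact Or.inl ⟨i, hl'⟩
    · obtain rfl : q = (a, b - 1) := Prod.ext h1.symm (by simp only at h2 ⊢; omega)
      exact Or.inr ⟨i, hl'⟩
  · rintro ⟨l', ⟨i, hl'⟩ | ⟨i, hl'⟩, rfl⟩
    · exact ⟨i, hl'.snoc (Or.inl ⟨rfl, rfl⟩) ht⟩
    · exact ⟨i, hl'.snoc (Or.inr ⟨rfl, by simp only; omega⟩) ht⟩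

lemma disjoint_diagPaths {D : Set (ℕ × ℕ)} {t t' : ℕ × ℕ} (h : t ≠ t') :
    Disjoint (diagPaths D t) (diagPaths D t') :=
  Set.disjoint_left.2 fun _ ⟨_, _, _, hl, _⟩ ⟨_, _, _, hl', _⟩ =>
    h (Option.some.inj (hl.symm.trans hl'))

lemma ncard_diagPaths_eq_add {D : Set (ℕ × ℕ)} (hD : D.Finite) {a b : ℕ} (hab : a < b)
    (ht : (a, b) ∈ D) :
    (diagPaths D (a, b)).ncard =
      (diagPaths D (a + 1, b)).ncard + (diagPaths D (a, b - 1)).ncard := by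
  rw [diagPaths_eq_image_snoc hab ht, Set.ncard_image_of_injective _ (List.append_left_injective _),
    Set.ncard_union_eq (disjoint_diagPaths (by simp)) (diagPaths_finite hD _)
      (diagPaths_finite hD _)]

lemma diagPaths_truncCols (D : Set (ℕ × ℕ)) (a b : ℕ) :
    diagPaths (truncCols b D) (a, b) = diagPaths D (a, b) :=
  (diagPaths_mono (fun _ hp => hp.1) _).antisymm fun _ ⟨i, hl⟩ =>
    ⟨i, hl.1, hl.2.1, hl.2.2.1, fun x hx => ⟨hl.2.2.2 x hx, (hl.le_of_mem x hx).2⟩⟩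

lemma diagPaths_succ_succ (D : Set (ℕ × ℕ)) {a : ℕ} (ha : 1 ≤ a) (b : ℕ) :
    diagPaths D (a + 1, b + 1) = List.map (shiftDiag 1) '' diagPaths (deleteTopRow D) (a, b) := by
  ext l
  constructor
  · rintro ⟨i, hl⟩
    obtain ⟨l₀, rfl⟩ : l ∈ Set.range (List.map (shiftDiag 1)) := by
      rw [Set.range_list_map]
      intro x hx
      have h1 := (hl.le_of_mem x hx).1
      have h2 := hl.fst_le_snd_of_mem x hx
      exact ⟨(x.1 - 1, x.2 - 1), Prod.ext (by simp only [shiftDiag]; omega)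
        (by simp only [shiftDiag]; omega)⟩
    have hi := (hl.le_of_mem (i, i) (List.mem_of_mem_head? hl.2.1)).1
    rw [show (i, i) = shiftDiag 1 (i - 1, i - 1) from Prod.ext (by simp only [shiftDiag]; omega)
      (by simp only [shiftDiag]; omega), show (a + 1, b + 1) = shiftDiag 1 (a, b) from rfl,
      IsNEPathIn.map_shiftDiag_iff] at hl
    exact ⟨l₀, ⟨i - 1, hl.1, hl.2.1, hl.2.2.1, fun x hx =>
      ⟨ha.trans (hl.le_of_mem x hx).1, hl.2.2.2 x hx⟩⟩, rfl⟩
  · rintro ⟨l₀, ⟨j, hl₀⟩, rfl⟩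
    exact ⟨j + 1, IsNEPathIn.map_shiftDiag_iff.2 (hl₀.mono fun _ hx => hx.2)⟩

/-- The key recursion `e(L) = e(L') + e(L'')`: a maximal path enters the corner `(1, n + 1)`
either from `(2, n + 1)`, and then avoids the top row, or from `(1, n)`, and then avoids the last
column. -/
theorem numMaxPaths_succ {n : ℕ} {D : Set (ℕ × ℕ)} (hn : 1 ≤ n) (hD : D.Finite)
    (hc : (1, n + 1) ∈ D) :
    numMaxPaths D (n + 1) = numMaxPaths (truncCols n D) n + numMaxPaths (deleteTopRow D) n := by
  rw [numMaxPaths_eq_ncard, ncard_diagPaths_eq_add hD (by omega) hc, Nat.add_sub_cancel,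
    numMaxPaths_eq_ncard, numMaxPaths_eq_ncard, diagPaths_truncCols, diagPaths_succ_succ D le_rfl,
    Set.ncard_image_of_injective _ (List.map_injective_iff.2 (shiftDiag_injective 1)), add_comm]

/-- If for every `0 ≤ s ≤ S` (with `S < n`) the Lex diagram of size `C(n+1,2) - s` minimizes
the number of maximal NE-paths among all strongly stable diagrams of that size on `n`
columns, then for every `0 ≤ s ≤ S` the Lex diagram of size `C(n+2,2) - s` minimizes it
among all strongly stable diagrams of that size on `n+1` columns. -/
theorem stmt_14 (n S : ℕ) (hn : 1 ≤ n) (hS : S < n)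
    (H : ∀ s ≤ S, ∀ D : Set (ℕ × ℕ), StronglyStableIn n D →
      D.ncard = Nat.choose (n + 1) 2 - s →
      numMaxPaths (lexSeg n (Nat.choose (n + 1) 2 - s)) n ≤ numMaxPaths D n) :
    ∀ s ≤ S, ∀ D : Set (ℕ × ℕ), StronglyStableIn (n + 1) D →
      D.ncard = Nat.choose (n + 2) 2 - s →
      numMaxPaths (lexSeg (n + 1) (Nat.choose (n + 2) 2 - s)) (n + 1)
        ≤ numMaxPaths D (n + 1) := by
  intro s hs D hD hcard
  have hsucc := Nat.choose_two_succ n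
  have hnT := Nat.self_le_succ_choose_two n
  have hDfin : D.Finite := (staircase_finite _).subset hD.1
  have hc : (1, n + 1) ∈ D := hD.corner_mem (by omega)
  have hk := ncard_lastCol_le (r := n + 1) hD.1 fun a ha => (hD.1 ha).2.1
  have hsk := hD.choose_sub_ncard_le
  rw [hcard, Nat.sub_sub_self (by omega)] at hsk
  have hcol := Set.ncard_sdiff_add_ncard_of_subset (fun _ hp => hp.1 : truncCols n D ⊆ D) hDfin
  generalize (D \ truncCols n D).ncard = k at hk hsk hcol
  have hcolT := ncard_le_of_subset_staircase (stronglyStableIn_truncCols hD).1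
  have hrow := hD.ncard_deleteTopRow_add hc
  have hcolD := H _ (by omega) _ (stronglyStableIn_truncCols hD) (Nat.sub_sub_self hcolT).symm
  have hrowD := H s hs _ (stronglyStableIn_deleteTopRow hD) (by omega)
  rw [Nat.sub_sub_self hcolT] at hcolD
  calc numMaxPaths (lexSeg (n + 1) ((n + 2).choose 2 - s)) (n + 1)
      = numMaxPaths (truncCols n (lexSeg (n + 1) ((n + 2).choose 2 - s))) n
        + numMaxPaths (deleteTopRow (lexSeg (n + 1) ((n + 2).choose 2 - s))) n :=
        numMaxPaths_succ hn (lexSeg_finite _ _) (corner_mem_lexSeg (by omega))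
    _ ≤ numMaxPaths (truncCols n D) n + numMaxPaths (deleteTopRow D) n := by
        gcongr
        · refine (numMaxPaths_mono (truncCols_lexSeg_subset hk hsk) (lexSeg_finite _ _) n).trans ?_
          rwa [show (n + 2).choose 2 - s - k = (truncCols n D).ncard by omega]
        · rwa [deleteTopRow_lexSeg, show (n + 2).choose 2 - s - (n + 1) = (n + 1).choose 2 - s by
            omega]
    _ = numMaxPaths D (n + 1) := (numMaxPaths_succ hn hDfin hc).symm
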